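/- For all positive integers r and s with s < r, the following identity holds: ∫_0^π e^{−iu} f_r(ψ_s(u)) du = m^{−r} ∫_0^{π/m} e^{−ium^{−r}} ψ_{s+r}(u) du + Σ_{l=0}^{r} m^{−l} ∫_{π/m}^{π} e^{−ium^{−l}} f_{r−l}(ψ_{s+l}(u)) du, where ψ_k(u) = f_k(e^{ium^{−k}}) is the characteristic function of W_k = m^{−k}Z_k. -/

import Mathlib

open MeasureTheory ProbabilityTheory Filter Set
open scoped ENNReal

noncomputable section

/-- `-log` of a nonnegative real, valued in `[0,∞]` (equals `∞` when the input is `≤ 0`). -/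
def negLog (s : ℝ) : ℝ≥0∞ := if s ≤ 0 then ⊤ else ENNReal.ofReal (-Real.log s)

/-- `e^{-t}` for `t ∈ [0,∞]`, with `e^{-∞} = 0`. -/
def expNegE (t : ℝ≥0∞) : ℝ := if t = ⊤ then 0 else Real.exp (-t.toReal)

/-- `EReal → ℝ≥0∞`, sending `⊤` to `⊤` and everything `≤ 0` to `0`. -/
def erealToENN (e : EReal) : ℝ≥0∞ := if e = ⊤ then ⊤ else ENNReal.ofReal e.toReal

/-- The large deviation principle for a sequence of (probability) measures on `ℝ` with
speed `a` and rate function `I`. -/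
def SatisfiesLDP (μs : ℕ → Measure ℝ) (a : ℕ → ℝ) (I : ℝ → ℝ≥0∞) : Prop :=
  LowerSemicontinuous I ∧
  (∀ G : Set ℝ, IsOpen G →
    (-(⨅ x ∈ G, (I x : EReal))) ≤
      Filter.liminf (fun n => ((a n)⁻¹ : EReal) * ENNReal.log (μs n G)) atTop) ∧
  (∀ F : Set ℝ, IsClosed F →
    Filter.limsup (fun n => ((a n)⁻¹ : EReal) * ENNReal.log (μs n F)) atTop ≤
      -(⨅ x ∈ F, (I x : EReal)))

/-- A good rate function: all (finite-level) level sets are compact. -/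
def GoodRate (I : ℝ → ℝ≥0∞) : Prop := ∀ L : ℝ≥0∞, L ≠ ⊤ → IsCompact {x | I x ≤ L}

/-- The generating function `f(s) = Σ_j p_j s^j` of the offspring distribution. -/
def gwf (p : ℕ → ℝ) : ℝ → ℝ := fun s => ∑' j, p j * s ^ j

/-- The hypotheses of a supercritical Galton–Watson process `Z` with offspring
distribution `p` (with `p 0 = 0`), offspring mean `m > 1`, built from the i.i.d. family `ξ`. -/
structure GWSetup {Ω : Type*} [MeasurableSpace Ω] (μ : Measure Ω) (p : ℕ → ℝ) (m : ℝ)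
    (ξ : ℕ → ℕ → Ω → ℕ) (Z : ℕ → Ω → ℕ) : Prop where
  prob : IsProbabilityMeasure μ
  pnonneg : ∀ j, 0 ≤ p j
  psum : HasSum p 1
  p0 : p 0 = 0
  mdef : HasSum (fun j : ℕ => (j : ℝ) * p j) m
  mgt1 : 1 < m
  meas : ∀ n i, Measurable (ξ n i)
  dist : ∀ n i j, (μ {ω | ξ n i ω = j}).toReal = p j
  indep : iIndepFun (fun (ni : ℕ × ℕ) ω => ξ ni.1 ni.2 ω) μ
  Z0 : ∀ ω, Z 0 ω = 1
  Zrec : ∀ n ω, Z (n + 1) ω = ∑ i ∈ Finset.range (Z n ω), ξ n i ω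


/-- The offspring generating function on the complex disc. -/
def gwfC (p : ℕ → ℝ) : ℂ → ℂ := fun z => ∑' j, (p j : ℂ) * z ^ j

/-- `ψ_k(u) = f_k(e^{ium^{-k}})`, the characteristic function of `W_k = m^{-k} Z_k`. -/
def psiC (p : ℕ → ℝ) (m : ℝ) (k : ℕ) (u : ℝ) : ℂ :=
  (gwfC p)^[k] (Complex.exp (Complex.I * ((u / m ^ k : ℝ) : ℂ)))

open Metric

section OffspringGeneratingFunction

variable {p : ℕ → ℝ} (hpnn : ∀ j, 0 ≤ p j)
include hpnn

lemma norm_coeff_mul_pow_le {z : ℂ} (hz : ‖z‖ ≤ 1) (j : ℕ) : ‖(p j : ℂ) * z ^ j‖ ≤ p j := by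
  rw [norm_mul, norm_pow, Complex.norm_real, Real.norm_of_nonneg (hpnn j)]
  exact mul_le_of_le_one_right (hpnn j) (pow_le_one₀ (norm_nonneg z) hz)

variable (hpsum : HasSum p 1)
include hpsum

lemma mapsTo_gwfC_closedBall : MapsTo (gwfC p) (closedBall 0 1) (closedBall 0 1) := by
  intro z hz
  rw [mem_closedBall_zero_iff] at hz ⊢
  have hle := norm_coeff_mul_pow_le hpnn hz
  have hsum : Summable fun j => ‖(p j : ℂ) * z ^ j‖ :=
    hpsum.summable.of_nonneg_of_le (fun _ => norm_nonneg _) hle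
  calc ‖gwfC p z‖ ≤ ∑' j, ‖(p j : ℂ) * z ^ j‖ := norm_tsum_le_tsum_norm hsum
    _ ≤ ∑' j, p j := hsum.tsum_le_tsum hle hpsum.summable
    _ = 1 := hpsum.tsum_eq

lemma continuousOn_gwfC_closedBall : ContinuousOn (gwfC p) (closedBall 0 1) :=
  continuousOn_tsum (fun j => by fun_prop) hpsum.summable fun j _ hz =>
    norm_coeff_mul_pow_le hpnn (mem_closedBall_zero_iff.mp hz) j

lemma continuous_iterate_gwfC_comp {g : ℝ → ℂ} (hg : Continuous g)
    (hg1 : ∀ u, g u ∈ closedBall 0 1) (n : ℕ) : Continuous fun u => (gwfC p)^[n] (g u) :=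
  ((continuousOn_gwfC_closedBall hpnn hpsum).iterate
    (mapsTo_gwfC_closedBall hpnn hpsum) n).comp_continuous hg hg1

end OffspringGeneratingFunction

lemma exp_I_mul_ofReal_mem_closedBall (t : ℝ) :
    Complex.exp (Complex.I * t) ∈ closedBall (0 : ℂ) 1 := by
  rw [mem_closedBall_zero_iff, mul_comm, Complex.norm_exp_ofReal_mul_I]

lemma psiC_add (p : ℕ → ℝ) (m : ℝ) (s l : ℕ) (u : ℝ) :
    psiC p m (s + l) u = (gwfC p)^[l] (psiC p m s (u / m ^ l)) := by
  rw [psiC, psiC, ← Function.iterate_add_apply, add_comm l s, div_div, ← pow_add, add_comm l s]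

lemma iterate_sub_gwfC_psiC_add (p : ℕ → ℝ) (m : ℝ) {r l : ℕ} (hl : l ≤ r) (s : ℕ) (u : ℝ) :
    (gwfC p)^[r - l] (psiC p m (s + l) u) = (gwfC p)^[r] (psiC p m s (u / m ^ l)) := by
  rw [psiC_add, ← Function.iterate_add_apply, Nat.sub_add_cancel hl]

lemma continuous_iterate_gwfC_psiC {p : ℕ → ℝ} (hpnn : ∀ j, 0 ≤ p j) (hpsum : HasSum p 1)
    (m : ℝ) (r s : ℕ) : Continuous fun u => (gwfC p)^[r] (psiC p m s u) := by
  simp only [psiC, ← Function.iterate_add_apply]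
  exact continuous_iterate_gwfC_comp hpnn hpsum (by fun_prop)
    (fun u => exp_I_mul_ofReal_mem_closedBall _) _

lemma inv_pow_mul_integral_comp_div (g : ℝ → ℂ) (m : ℝ) (l : ℕ) (a b : ℝ) :
    ((m : ℂ) ^ l)⁻¹ * (∫ u in a..b, g (u / m ^ l)) = ∫ u in a / m ^ l..b / m ^ l, g u := by
  rw [← intervalIntegral.inv_smul_integral_comp_div, Complex.real_smul]
  push_cast
  rfl

lemma sum_integral_adjacent_intervals_rev {g : ℝ → ℂ} (hg : Continuous g) (b : ℕ → ℝ) (n : ℕ) :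
    ∑ l ∈ Finset.range n, ∫ u in b (l + 1)..b l, g u = ∫ u in b n..b 0, g u := by
  rw [intervalIntegral.integral_symm,
    ← intervalIntegral.sum_integral_adjacent_intervals fun _ _ => hg.intervalIntegrable _ _,
    ← Finset.sum_neg_distrib]
  exact Finset.sum_congr rfl fun l _ => intervalIntegral.integral_symm _ _

open scoped Real in
theorem stmt15_general (p : ℕ → ℝ) (m : ℝ)
    (hpnn : ∀ j, 0 ≤ p j) (hpsum : HasSum p 1) :
    ∀ r s : ℕ, 0 < s → s < r →
      (∫ u in (0:ℝ)..π, Complex.exp (-(Complex.I * u)) * (gwfC p)^[r] (psiC p m s u)) =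
        ((m : ℂ) ^ r)⁻¹ *
          (∫ u in (0:ℝ)..(π / m),
            Complex.exp (-(Complex.I * ((u / m ^ r : ℝ) : ℂ))) * psiC p m (s + r) u) +
        ∑ l ∈ Finset.range (r + 1), ((m : ℂ) ^ l)⁻¹ *
          (∫ u in (π / m)..π,
            Complex.exp (-(Complex.I * ((u / m ^ l : ℝ) : ℂ))) *
              (gwfC p)^[r - l] (psiC p m (s + l) u)) := by
  intro r s _ _
  set H : ℝ → ℂ := fun u => Complex.exp (-(Complex.I * u)) * (gwfC p)^[r] (psiC p m s u)
  have hH : Continuous H := by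
    have := continuous_iterate_gwfC_psiC hpnn hpsum m r s
    fun_prop
  -- each integrand on the right is `H (u / m ^ l)`, so the substitution `u ↦ u / m ^ l` turns the
  -- right-hand side into integrals of `H` over `[0, π / m ^ (r + 1)]` and the adjacent intervals
  -- `[π / m ^ (l + 1), π / m ^ l]`, which together tile `[0, π]`
  have rescale : ∀ l ≤ r, ∀ a b : ℝ, ((m : ℂ) ^ l)⁻¹ * (∫ u in a..b,
      Complex.exp (-(Complex.I * ((u / m ^ l : ℝ) : ℂ))) * (gwfC p)^[r - l] (psiC p m (s + l) u))
      = ∫ u in a / m ^ l..b / m ^ l, H u := fun l hl a b => by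
    rw [← inv_pow_mul_integral_comp_div H m l a b]
    congr 2
    funext u
    rw [iterate_sub_gwfC_psiC_add p m hl]
  have first := rescale r le_rfl 0 (π / m)
  simp only [Nat.sub_self, Function.iterate_zero_apply, zero_div, div_div, ← pow_succ'] at first
  rw [first, Finset.sum_congr rfl fun l hl =>
    rescale l (Nat.lt_succ_iff.mp (Finset.mem_range.mp hl)) _ _]
  simp only [div_div, ← pow_succ']
  rw [sum_integral_adjacent_intervals_rev hH (fun l => π / m ^ l), pow_zero, div_one,
    intervalIntegral.integral_add_adjacent_intervals (hH.intervalIntegrable _ _)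
      (hH.intervalIntegrable _ _)]

open scoped Real in
/-- Lemma 1 of Ney–Vidyashankar (the decomposition lemma). -/
theorem stmt15 (p : ℕ → ℝ) (m : ℝ)
    (hpnn : ∀ j, 0 ≤ p j) (hpsum : HasSum p 1) (hp0 : p 0 = 0)
    (hm : HasSum (fun j : ℕ => (j : ℝ) * p j) m) (hm1 : 1 < m) :
    ∀ r s : ℕ, 0 < s → s < r →
      (∫ u in (0:ℝ)..π, Complex.exp (-(Complex.I * u)) * (gwfC p)^[r] (psiC p m s u)) =
        ((m : ℂ) ^ r)⁻¹ *
          (∫ u in (0:ℝ)..(π / m),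
            Complex.exp (-(Complex.I * ((u / m ^ r : ℝ) : ℂ))) * psiC p m (s + r) u) +
        ∑ l ∈ Finset.range (r + 1), ((m : ℂ) ^ l)⁻¹ *
          (∫ u in (π / m)..π,
            Complex.exp (-(Complex.I * ((u / m ^ l : ℝ) : ℂ))) *
              (gwfC p)^[r - l] (psiC p m (s + l) u)) :=
  stmt15_general p m hpnn hpsum

end
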